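/- Let k be a field of characteristic 2 and let b_1,…,b_8, c_1,c_2,c_3, d_1,d_2,d_3 ∈ k satisfy b_1b_2 = b_3b_4 and b_5b_6 = b_7b_8. In k[x,y,z,t] define A = c_1x² + d_2y² + d_3z² + b_4yz + b_5xy, B = c_2x² + d_1y² + d_3t² + b_1xt + b_6xy, C = c_3x² + d_1z² + d_2t² + b_2xt + b_8zt, D = b_1xz + b_4yt + b_7x² + b_8y², E = b_6xz + b_8yt + b_3x² + b_4t², F = b_2xy + b_4zt + b_5xt + b_8yz. Then AE² + BF² + CD² + DEF = x² · F_0, where F_0 = (b_3²c_1+b_7²c_3)x⁴ + (b_2²d_1+b_8²c_3)y⁴ + (b_1²d_1+b_6²d_3)z⁴ + (b_4²c_1+b_5²d_3)t⁴ + b_5(b_1b_5+b_4b_7)xt³ + b_7(b_2b_7+b_3b_5)x³t + b_2(b_2b_6+b_3b_8)xy³ + b_8(b_2b_6+b_3b_8)y³z + b_3(b_2b_7+b_3b_5)x³y + b_4(b_1b_5+b_4b_7)zt³ + b_6(b_1b_8+b_4b_6)yz³ + b_1(b_1b_8+b_4b_6)z³t + (b_2²c_2+b_3²d_2)x²y²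 + (b_1²c_3+b_3²d_3+b_6²c_1+b_7²d_1)x²z² + (b_5²c_2+b_7²d_2)x²t² + (b_6²d_2+b_8²c_2)y²z² + (b_2²d_3+b_4²c_3+b_5²d_1+b_8²c_1)y²t² + (b_1²d_2+b_4²c_2)z²t² + b_7(b_2b_6+b_3b_8)x²yz + b_3(b_1b_5+b_4b_7)x²zt + b_8(b_2b_7+b_3b_5)xy²t + b_2(b_1b_8+b_4b_6)y²zt + b_1(b_2b_6+b_3b_8)xyz² + b_6(b_1b_5+b_4b_7)xz²t + b_4(b_2b_7+b_3b_5)xyt² + b_5(b_1b_8+b_4b_6)yzt². -/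
import Mathlib


open MvPolynomial

/-- The supersingular Kummer quartic polynomial `F₀`; coordinates
`(x,y,z,t) = (X 0, X 1, X 2, X 3)`. -/
noncomputable def F0P (k : Type*) [Field k]
    (b1 b2 b3 b4 b5 b6 b7 b8 c1 c2 c3 d1 d2 d3 : k) : MvPolynomial (Fin 4) k :=
  C (b3^2*c1 + b7^2*c3) * X 0 ^ 4 + C (b2^2*d1 + b8^2*c3) * X 1 ^ 4
    + C (b1^2*d1 + b6^2*d3) * X 2 ^ 4 + C (b4^2*c1 + b5^2*d3) * X 3 ^ 4
    + C (b5*(b1*b5 + b4*b7)) * (X 0 * X 3 ^ 3)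
    + C (b7*(b2*b7 + b3*b5)) * (X 0 ^ 3 * X 3)
    + C (b2*(b2*b6 + b3*b8)) * (X 0 * X 1 ^ 3)
    + C (b8*(b2*b6 + b3*b8)) * (X 1 ^ 3 * X 2)
    + C (b3*(b2*b7 + b3*b5)) * (X 0 ^ 3 * X 1)
    + C (b4*(b1*b5 + b4*b7)) * (X 2 * X 3 ^ 3)
    + C (b6*(b1*b8 + b4*b6)) * (X 1 * X 2 ^ 3)
    + C (b1*(b1*b8 + b4*b6)) * (X 2 ^ 3 * X 3)
    + C (b2^2*c2 + b3^2*d2) * (X 0 ^ 2 * X 1 ^ 2)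
    + C (b1^2*c3 + b3^2*d3 + b6^2*c1 + b7^2*d1) * (X 0 ^ 2 * X 2 ^ 2)
    + C (b5^2*c2 + b7^2*d2) * (X 0 ^ 2 * X 3 ^ 2)
    + C (b6^2*d2 + b8^2*c2) * (X 1 ^ 2 * X 2 ^ 2)
    + C (b2^2*d3 + b4^2*c3 + b5^2*d1 + b8^2*c1) * (X 1 ^ 2 * X 3 ^ 2)
    + C (b1^2*d2 + b4^2*c2) * (X 2 ^ 2 * X 3 ^ 2)
    + C (b7*(b2*b6 + b3*b8)) * (X 0 ^ 2 * X 1 * X 2)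
    + C (b3*(b1*b5 + b4*b7)) * (X 0 ^ 2 * X 2 * X 3)
    + C (b8*(b2*b7 + b3*b5)) * (X 0 * X 1 ^ 2 * X 3)
    + C (b2*(b1*b8 + b4*b6)) * (X 1 ^ 2 * X 2 * X 3)
    + C (b1*(b2*b6 + b3*b8)) * (X 0 * X 1 * X 2 ^ 2)
    + C (b6*(b1*b5 + b4*b7)) * (X 0 * X 2 ^ 2 * X 3)
    + C (b4*(b2*b7 + b3*b5)) * (X 0 * X 1 * X 3 ^ 2)
    + C (b5*(b1*b8 + b4*b6)) * (X 1 * X 2 * X 3 ^ 2)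

set_option maxHeartbeats 4000000 in
/-- the discriminant identity `AE² + BF² + CD² + DEF = x²·F₀`
for the supersingular quadric line complex. -/
theorem stmt_9 (k : Type*) [Field k] [CharP k 2]
    (b1 b2 b3 b4 b5 b6 b7 b8 c1 c2 c3 d1 d2 d3 : k)
    (hb : b1 * b2 = b3 * b4) (hb' : b5 * b6 = b7 * b8) :
    (C c1 * X 0 ^ 2 + C d2 * X 1 ^ 2 + C d3 * X 2 ^ 2
        + C b4 * (X 1 * X 2) + C b5 * (X 0 * X 1)) *
      (C b6 * (X 0 * X 2) + C b8 * (X 1 * X 3) + C b3 * X 0 ^ 2 + C b4 * X 3 ^ 2) ^ 2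
    + (C c2 * X 0 ^ 2 + C d1 * X 1 ^ 2 + C d3 * X 3 ^ 2
        + C b1 * (X 0 * X 3) + C b6 * (X 0 * X 1)) *
      (C b2 * (X 0 * X 1) + C b4 * (X 2 * X 3) + C b5 * (X 0 * X 3)
        + C b8 * (X 1 * X 2)) ^ 2
    + (C c3 * X 0 ^ 2 + C d1 * X 2 ^ 2 + C d2 * X 3 ^ 2
        + C b2 * (X 0 * X 3) + C b8 * (X 2 * X 3)) *
      (C b1 * (X 0 * X 2) + C b4 * (X 1 * X 3) + C b7 * X 0 ^ 2 + C b8 * X 1 ^ 2) ^ 2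
    + (C b1 * (X 0 * X 2) + C b4 * (X 1 * X 3) + C b7 * X 0 ^ 2 + C b8 * X 1 ^ 2) *
      (C b6 * (X 0 * X 2) + C b8 * (X 1 * X 3) + C b3 * X 0 ^ 2 + C b4 * X 3 ^ 2) *
      (C b2 * (X 0 * X 1) + C b4 * (X 2 * X 3) + C b5 * (X 0 * X 3) + C b8 * (X 1 * X 2))
    = X 0 ^ 2 * F0P k b1 b2 b3 b4 b5 b6 b7 b8 c1 c2 c3 d1 d2 d3 := by
  have h2 : (2 : MvPolynomial (Fin 4) k) = 0 := by
    have := CharP.cast_eq_zero (MvPolynomial (Fin 4) k) 2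
    exact_mod_cast this
  have h1 : (C b1 * C b2 : MvPolynomial (Fin 4) k) = C b3 * C b4 := by
    rw [← C_mul, ← C_mul, hb]
  have h1' : (C b5 * C b6 : MvPolynomial (Fin 4) k) = C b7 * C b8 := by
    rw [← C_mul, ← C_mul, hb']
  unfold F0P
  linear_combination (norm := (simp only [C_add, C_mul, C_pow]; ring1)) h2 * ((C b8)^2*(C d3)*(X 1)^2*(X 2)^2*(X 3)^2 + (C b8)^2*(C d2)*(X 1)^4*(X 3)^2 + (C b8)^2*(C d1)*(X 1)^4*(X 2)^2 + (C b8)^3*(X 1)^4*(X 2)*(X 3) + (C b7)*(C b8)*(C d2)*(X 0)^2*(X 1)^2*(X 3)^2 + (C b7)*(C b8)*(C d1)*(X 0)^2*(X 1)^2*(X 2)^2 + (C b7)*(C b8)*(C c3)*(X 0)^4*(X 1)^2 + (4:MvPolynomial (Fin 4) k)*(C b7)*(C b8)^2*(X 0)^2*(X 1)^2*(X 2)*(X 3) + (C b7)^2*(C b8)*(X 0)^4*(X 2)*(X 3) + (C b6)*(C b8)*(C d3)*(X 0)*(X 1)*(X 2)^3*(X 3) + (C b6)*(C b8)*(C d2)*(X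 0)*(X 1)^3*(X 2)*(X 3) + (C b6)*(C b8)*(C c1)*(X 0)^3*(X 1)*(X 2)*(X 3) + (C b6)*(C b8)^2*(X 0)*(X 1)^3*(X 2)^2 + (C b6)*(C b7)*(C b8)*(X 0)^3*(X 1)*(X 2)^2 + (C b5)*(C b8)*(C d3)*(X 0)*(X 1)*(X 2)*(X 3)^3 + (C b5)*(C b8)*(C d1)*(X 0)*(X 1)^3*(X 2)*(X 3) + (C b5)*(C b8)*(C c2)*(X 0)^3*(X 1)*(X 2)*(X 3) + (C b5)*(C b8)^2*(X 0)*(X 1)^3*(X 3)^2 + (C b5)*(C b7)*(C b8)*(X 0)^3*(X 1)*(X 3)^2 + (2:MvPolynomial (Fin 4) k)*(C b4)*(C b8)*(C d3)*(X 1)*(X 2)^2*(X 3)^3 + (2:MvPolynomial (Fin 4) k)*(C b4)*(C b8)*(C d2)*(X 1)^3*(X 3)^3 + (2:MvPolynomial (Fin 4) k)*(C b4)*(C b8)*(C d1)*(X 1)^3*(X 2)^2*(X 3) + (C b4)*(C b8)*(C c3)*(X 0)^2*(X 1)^3*(X 3) + (C b4)*(C b8)*(C c2)*(X 0)^2*(X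 1)*(X 2)^2*(X 3) + (C b4)*(C b8)*(C c1)*(X 0)^2*(X 1)*(X 3)^3 + (3:MvPolynomial (Fin 4) k)*(C b4)*(C b8)^2*(X 1)^3*(X 2)*(X 3)^2 + (C b4)*(C b7)*(C d2)*(X 0)^2*(X 1)*(X 3)^3 + (C b4)*(C b7)*(C d1)*(X 0)^2*(X 1)*(X 2)^2*(X 3) + (C b4)*(C b7)*(C c3)*(X 0)^4*(X 1)*(X 3) + (4:MvPolynomial (Fin 4) k)*(C b4)*(C b7)*(C b8)*(X 0)^2*(X 1)*(X 2)*(X 3)^2 + (C b4)*(C b6)*(C d3)*(X 0)*(X 2)^3*(X 3)^2 + (C b4)*(C b6)*(C d2)*(X 0)*(X 1)^2*(X 2)*(X 3)^2 + (C b4)*(C b6)*(C c1)*(X 0)^3*(X 2)*(X 3)^2 + (3:MvPolynomial (Fin 4) k)*(C b4)*(C b6)*(C b8)*(X 0)*(X 1)^2*(X 2)^2*(X 3) + (C b4)*(C b5)*(C d3)*(X 0)*(X 2)*(X 3)^4 + (C b4)*(C b5)*(C d1)*(X 0)*(X 1)^2*(X 2)*(X 3)^2 + (C b4)*(C b5)*(C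 c2)*(X 0)^3*(X 2)*(X 3)^2 + (2:MvPolynomial (Fin 4) k)*(C b4)*(C b5)*(C b8)*(X 0)*(X 1)^2*(X 3)^3 + (C b4)^2*(C d3)*(X 2)^2*(X 3)^4 + (C b4)^2*(C d2)*(X 1)^2*(X 3)^4 + (C b4)^2*(C d1)*(X 1)^2*(X 2)^2*(X 3)^2 + (3:MvPolynomial (Fin 4) k)*(C b4)^2*(C b8)*(X 1)^2*(X 2)*(X 3)^3 + (2:MvPolynomial (Fin 4) k)*(C b4)^2*(C b6)*(X 0)*(X 1)*(X 2)^2*(X 3)^2 + (C b4)^2*(C b5)*(X 0)*(X 1)*(X 3)^4 + (C b4)^3*(X 1)*(X 2)*(X 3)^4 + (C b3)*(C b8)*(C d3)*(X 0)^2*(X 1)*(X 2)^2*(X 3) + (C b3)*(C b8)*(C d2)*(X 0)^2*(X 1)^3*(X 3) + (C b3)*(C b8)*(C c1)*(X 0)^4*(X 1)*(X 3) + (C b3)*(C b7)*(C b8)*(X 0)^4*(X 1)*(X 2) + (C b3)*(C b6)*(C d3)*(X 0)^3*(X 2)^3 + (C b3)*(C b6)*(C d2)*(X 0)^3*(X 1)^2*(X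 2) + (C b3)*(C b6)*(C c1)*(X 0)^5*(X 2) + (C b3)*(C b5)*(C b8)*(X 0)^3*(X 1)^2*(X 3) + (C b3)*(C b4)*(C d3)*(X 0)^2*(X 2)^2*(X 3)^2 + (C b3)*(C b4)*(C d2)*(X 0)^2*(X 1)^2*(X 3)^2 + (C b3)*(C b4)*(C c1)*(X 0)^4*(X 3)^2 + (4:MvPolynomial (Fin 4) k)*(C b3)*(C b4)*(C b8)*(X 0)^2*(X 1)^2*(X 2)*(X 3) + (C b3)*(C b4)*(C b7)*(X 0)^4*(X 2)*(X 3) + (C b3)*(C b4)*(C b6)*(X 0)^3*(X 1)*(X 2)^2 + (2:MvPolynomial (Fin 4) k)*(C b3)*(C b4)*(C b5)*(X 0)^3*(X 1)*(X 3)^2 + (4:MvPolynomial (Fin 4) k)*(C b3)*(C b4)^2*(X 0)^2*(X 1)*(X 2)*(X 3)^2 + (C b3)^2*(C b4)*(X 0)^4*(X 1)*(X 2) + (C b2)*(C b8)*(C d3)*(X 0)*(X 1)^2*(X 2)*(X 3)^2 + (C b2)*(C b8)*(C d1)*(X 0)*(X 1)^4*(X 2) + (C b2)*(C b8)*(C c2)*(X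 0)^3*(X 1)^2*(X 2) + (C b2)*(C b8)^2*(X 0)*(X 1)^4*(X 3) + (2:MvPolynomial (Fin 4) k)*(C b2)*(C b7)*(C b8)*(X 0)^3*(X 1)^2*(X 3) + (C b2)*(C b6)*(C b8)*(X 0)^2*(X 1)^3*(X 2) + (C b2)*(C b5)*(C d3)*(X 0)^2*(X 1)*(X 3)^3 + (C b2)*(C b5)*(C d1)*(X 0)^2*(X 1)^3*(X 3) + (C b2)*(C b5)*(C c2)*(X 0)^4*(X 1)*(X 3) + (C b2)*(C b4)*(C d3)*(X 0)*(X 1)*(X 2)*(X 3)^3 + (C b2)*(C b4)*(C d1)*(X 0)*(X 1)^3*(X 2)*(X 3) + (C b2)*(C b4)*(C c2)*(X 0)^3*(X 1)*(X 2)*(X 3) + (2:MvPolynomial (Fin 4) k)*(C b2)*(C b4)*(C b8)*(X 0)*(X 1)^3*(X 3)^2 + (C b2)*(C b4)*(C b7)*(X 0)^3*(X 1)*(X 3)^2 + (C b2)*(C b4)*(C b6)*(X 0)^2*(X 1)^2*(X 2)*(X 3) + (C b2)*(C b4)^2*(X 0)*(X 1)^2*(X 3)^3 + (C b2)*(C b3)*(C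 b4)*(X 0)^3*(X 1)^2*(X 3) + (C b1)*(C b8)*(C d2)*(X 0)*(X 1)^2*(X 2)*(X 3)^2 + (C b1)*(C b8)*(C d1)*(X 0)*(X 1)^2*(X 2)^3 + (C b1)*(C b8)*(C c3)*(X 0)^3*(X 1)^2*(X 2) + (2:MvPolynomial (Fin 4) k)*(C b1)*(C b8)^2*(X 0)*(X 1)^2*(X 2)^2*(X 3) + (C b1)*(C b7)*(C d2)*(X 0)^3*(X 2)*(X 3)^2 + (C b1)*(C b7)*(C d1)*(X 0)^3*(X 2)^3 + (C b1)*(C b7)*(C c3)*(X 0)^5*(X 2) + (C b1)*(C b7)*(C b8)*(X 0)^3*(X 2)^2*(X 3) + (C b1)*(C b5)*(C b8)*(X 0)^2*(X 1)*(X 2)*(X 3)^2 + (C b1)*(C b4)*(C d2)*(X 0)*(X 1)*(X 2)*(X 3)^3 + (C b1)*(C b4)*(C d1)*(X 0)*(X 1)*(X 2)^3*(X 3) + (C b1)*(C b4)*(C c3)*(X 0)^3*(X 1)*(X 2)*(X 3) + (3:MvPolynomial (Fin 4) k)*(C b1)*(C b4)*(C b8)*(X 0)*(X 1)*(X 2)^2*(X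 3)^2 + (C b1)*(C b4)*(C b5)*(X 0)^2*(X 2)*(X 3)^3 + (C b1)*(C b4)^2*(X 0)*(X 2)^2*(X 3)^3 + (C b1)*(C b3)*(C b4)*(X 0)^3*(X 2)^2*(X 3)) + h1 * ((4:MvPolynomial (Fin 4) k)*(C b8)*(X 0)^2*(X 1)^2*(X 2)*(X 3) + (2:MvPolynomial (Fin 4) k)*(C b7)*(X 0)^4*(X 2)*(X 3) + (2:MvPolynomial (Fin 4) k)*(C b5)*(X 0)^3*(X 1)*(X 3)^2 + (5:MvPolynomial (Fin 4) k)*(C b4)*(X 0)^2*(X 1)*(X 2)*(X 3)^2 + (C b3)*(X 0)^4*(X 1)*(X 2) + (C b2)*(X 0)^3*(X 1)^2*(X 3) + (C b1)*(X 0)^3*(X 2)^2*(X 3)) + h1' * ((5:MvPolynomial (Fin 4) k)*(C b8)*(X 0)^2*(X 1)^2*(X 2)*(X 3) + (C b7)*(X 0)^4*(X 2)*(X 3) + (C b6)*(X 0)^3*(X 1)*(X 2)^2 + (C b5)*(X 0)^3*(X 1)*(X 3)^2 + (4:MvPolynomial (Fin 4) k)*(C b4)*(X 0)^2*(X 1)*(X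 2)*(X 3)^2 + (2:MvPolynomial (Fin 4) k)*(C b3)*(X 0)^4*(X 1)*(X 2) + (2:MvPolynomial (Fin 4) k)*(C b2)*(X 0)^3*(X 1)^2*(X 3))
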